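/- Let μ and ν be probability measures on a metric space, Ψ a family of ν-integrable functions, and g#μ a pushforward measure. If (a) sup over all dual-admissible ψ of [∫ ψ^c d(g#μ) + ∫ ψ dν] exceeds the same supremum restricted to Ψ by at most ε, and (b) every ψ ∈ Ψ satisfies ∫ ψ dν ≤ D + ∫ ψ dν̂ for an empirical measure ν̂, then the optimal transport cost satisfies T_c(g#μ, ν) ≤ D + ε + T_c(g#μ, ν̂). -/
import Mathlib


open MeasureTheory

/-- The c-transform of a potential `ψ`: `ψ^c(x) = ⨅ y, c x y - ψ y`. -/
noncomputable def cTransform {X : Type*} (c : X → X → ℝ) (ψ : X → ℝ) (x : X) : ℝ :=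
  ⨅ y, (c x y - ψ y)

/-- The dual objective value `∫ ψ^c dμ' + ∫ ψ dν'` for a potential `ψ`. -/
noncomputable def dualObj {X : Type*} [MeasurableSpace X]
    (c : X → X → ℝ) (μ' ν' : Measure X) (ψ : X → ℝ) : ℝ :=
  (∫ x, cTransform c ψ x ∂μ') + ∫ x, ψ x ∂ν'

theorem stmt_5 {X : Type*} [MeasurableSpace X] [MetricSpace X] [PolishSpace X]
    [BorelSpace X] (c : X → X → ℝ)
    (μ' ν νhat : Measure X) [IsProbabilityMeasure μ'] [IsProbabilityMeasure ν]
    [IsProbabilityMeasure νhat]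
    (Ψ : Set (X → ℝ)) (hΨν : ∀ ψ ∈ Ψ, Integrable ψ ν) (hΨνhat : ∀ ψ ∈ Ψ, Integrable ψ νhat)
    (hΨne : Ψ.Nonempty)
    (Tν Tνhat D ε : ℝ) (hD : 0 ≤ D) (hε : 0 < ε)
    -- Kantorovich duality: the transport cost to ν equals the dual supremum over L¹(ν)
    (hdualν : Tν = sSup {r : ℝ | ∃ ψ : X → ℝ, Integrable ψ ν ∧ r = dualObj c μ' ν ψ})
    -- weak duality on the empirical side: the dual supremum over L¹(ν̂) is at most T_c(μ', ν̂)
    (hdualνhat :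
      sSup {r : ℝ | ∃ ψ : X → ℝ, Integrable ψ νhat ∧ r = dualObj c μ' νhat ψ} ≤ Tνhat)
    (hbdd : BddAbove {r : ℝ | ∃ ψ : X → ℝ, Integrable ψ νhat ∧ r = dualObj c μ' νhat ψ})
    -- (a) approximation condition
    (happrox :
      sSup {r : ℝ | ∃ ψ : X → ℝ, Integrable ψ ν ∧ r = dualObj c μ' ν ψ}
        ≤ ε + sSup {r : ℝ | ∃ ψ ∈ Ψ, r = dualObj c μ' ν ψ})
    (hbddΨ : BddAbove {r : ℝ | ∃ ψ ∈ Ψ, r = dualObj c μ' ν ψ})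
    -- (b) generalization condition
    (hgen : ∀ ψ ∈ Ψ, (∫ x, ψ x ∂ν) ≤ D + ∫ x, ψ x ∂νhat) :
    Tν ≤ D + ε + Tνhat := by
  have key : sSup {r : ℝ | ∃ ψ ∈ Ψ, r = dualObj c μ' ν ψ} ≤ D + Tνhat := by
    obtain ⟨ψ₀, hψ₀⟩ := hΨne
    have hne : ({r : ℝ | ∃ ψ ∈ Ψ, r = dualObj c μ' ν ψ}).Nonempty :=
      ⟨dualObj c μ' ν ψ₀, ψ₀, hψ₀, rfl⟩
    apply csSup_le hne
    rintro r ⟨ψ, hψ, rfl⟩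
    have h1 : dualObj c μ' ν ψ ≤ D + dualObj c μ' νhat ψ := by
      simp only [dualObj]
      have := hgen ψ hψ
      linarith
    have h2 : dualObj c μ' νhat ψ ≤
        sSup {r : ℝ | ∃ ψ : X → ℝ, Integrable ψ νhat ∧ r = dualObj c μ' νhat ψ} :=
      le_csSup hbdd ⟨ψ, hΨνhat ψ hψ, rfl⟩
    linarith [hdualνhat]
  linarith [hdualν, happrox]
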